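/- If M is a simple matroid with no U_{2,ℓ+2}-minor (where ℓ ≥ 2), then the number of elements of M is at most (ℓ^{r(M)} − 1)/(ℓ − 1). -/

import Mathlib

/-!
Kung's argument: contracting a nonloop `b` sends every point of `M` other than `cl {b}` to a
point of `M ／ b`, and the points in one fibre, together with `cl {b}`, lie on a common line
through `b`. Choosing one element from each of these points gives a simple rank-2 restriction,
so a line carries at most `ℓ + 1` points and each fibre has at most `ℓ` of them. Hence
`ε(M) ≤ ℓ ε(M ／ b) + 1`, and induction on the rank gives `(ℓ - 1) ε(M) ≤ ℓ ^ r(M) - 1`.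
For a simple matroid, `e ↦ cl {e}` embeds the ground set into the points.
-/

open Set Matroid
open scoped Matroid

namespace MatroidDHJ

variable {α β : Type*}

/-- The rank of a set in a matroid, as an extended natural number. -/
noncomputable def er (M : Matroid α) (X : Set α) : ℕ∞ :=
  ⨆ I : {I : Set α // M.Indep I ∧ I ⊆ X}, (I : Set α).encard

/-- The rank of a set, as a natural number. -/
noncomputable def r (M : Matroid α) (X : Set α) : ℕ := (er M X).toNat

/-- The rank of a matroid. -/
noncomputable def rk (M : Matroid α) : ℕ := r M M.E

/-- Deletion of a set from a matroid. -/
def delete (M : Matroid α) (D : Set α) : Matroid α := M ↾ (M.E \ D)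

/-- Contraction of a set in a matroid. -/
def contract (M : Matroid α) (C : Set α) : Matroid α := (delete M✶ C)✶

/-- `N` is a minor of `M` if it is obtained by a contraction followed by a deletion. -/
def IsMinor (N M : Matroid α) : Prop := ∃ C D, delete (contract M C) D = N

/-- A matroid is simple if every set of at most two elements of the ground set
is independent. -/
def Simple (M : Matroid α) : Prop := ∀ I ⊆ M.E, I.encard ≤ 2 → M.Indep I

/-- `M` has a `U_{2,n}`-minor iff it has a minor that is a simple rank-2 matroid
on `n` elements. -/
def HasU2Minor (M : Matroid α) (n : ℕ) : Prop :=
  ∃ N, IsMinor N M ∧ Simple N ∧ er N N.E = 2 ∧ N.E.encard = n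

/-- A point of a matroid is a rank-one flat. -/
def Point (M : Matroid α) (P : Set α) : Prop := M.IsFlat P ∧ er M P = 1

/-- `ε M` is the number of points of `M`. -/
noncomputable def eps (M : Matroid α) : ℕ := {P | Point M P}.ncard

/-- A representation of a matroid over a field `F`: an assignment of vectors to
the elements so that independence coincides with linear independence. -/
def Rep (M : Matroid α) (F : Type) [Field F] : Prop :=
  ∃ (n : ℕ) (φ : α → (Fin n → F)),
    ∀ I ⊆ M.E, (M.Indep I ↔ LinearIndependent F fun x : I => φ x)

/-- Representability over the field with `q` elements (`q` a prime power). -/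
def RepGF (M : Matroid α) (q : ℕ) : Prop :=
  ∃ (F : Type) (hF : Field F) (hfin : Fintype F),
    @Fintype.card F hfin = q ∧ @Rep _ M F hF

/-- `M` is (isomorphic to) the projective geometry `PG(n-1,q)`: a simple
`GF(q)`-representable matroid of rank `n` with `(q^n - 1)/(q - 1)` elements. -/
def IsPG (M : Matroid α) (n q : ℕ) : Prop :=
  Simple M ∧ RepGF M q ∧ M.E.Finite ∧ rk M = n ∧ (q - 1) * M.E.ncard = q ^ n - 1

/-- A hyperplane of a matroid: a flat whose rank is one less than that of `M`. -/
def Hyperplane (M : Matroid α) (H : Set α) : Prop := M.IsFlat H ∧ r M H + 1 = rk M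

/-- An isomorphism between matroids on different ground types. -/
def IsIsoTo (M : Matroid α) (N : Matroid β) : Prop :=
  ∃ e : M.E ≃ N.E, ∀ I : Set M.E,
    M.Indep ((↑) '' I) ↔ N.Indep ((↑) '' (e '' I))

/-- `M` is (isomorphic to) the affine geometry `AG(n-1,q)`: the deletion of a
hyperplane from `PG(n-1,q)`. -/
def IsAG (M : Matroid α) (n q : ℕ) : Prop :=
  ∃ (P : Matroid ℕ) (H : Set ℕ), IsPG P n q ∧ Hyperplane P H ∧
    IsIsoTo (delete P H) M

/-- `F` is a witnessing family for `S` being a `(q,h,t)`-stack. -/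
def StackWitness (S : Matroid α) (q h t : ℕ) (F : Fin h → Set α) : Prop :=
  (∀ i, F i ⊆ S.E) ∧ Pairwise (Function.onFun Disjoint F) ∧
    S.E ⊆ S.closure (⋃ i, F i) ∧
    ∀ i : Fin h,
      er (contract S (⋃ j ∈ {j | j < i}, F j) ↾ F i) (F i) ≤ t ∧
      ¬ RepGF (contract S (⋃ j ∈ {j | j < i}, F j) ↾ F i) q

/-- `S` is a `(q,h,t)`-stack. -/
def IsStack (S : Matroid α) (q h t : ℕ) : Prop := ∃ F, StackWitness S q h t F

/-- A matroid is weakly round if no two sets of ranks at most `r(M)-1` and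
`r(M)-2` respectively have union the ground set. -/
def WeaklyRound (M : Matroid α) : Prop :=
  ¬ ∃ A B : Set α, A ∪ B = M.E ∧ r M A + 1 ≤ rk M ∧ r M B + 2 ≤ rk M

/-- `N` is a simplification of `M`: a restriction of `M` to a set of nonloops
containing exactly one element of each point of `M`. -/
def IsSimplification (N M : Matroid α) : Prop :=
  ∃ S ⊆ M.E, N = M ↾ S ∧ (∀ e ∈ S, er M {e} = 1) ∧
    ∀ P, Point M P → ∃! e, e ∈ S ∩ P

end MatroidDHJ

open MatroidDHJ
open scoped Matroid

namespace MatroidDHJ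

variable {α β : Type*} {M N : Matroid α} {I T X P : Set α} {b e f : α} {ℓ n : ℕ}

lemma er_eq_eRk (M : Matroid α) (X : Set α) : er M X = M.eRk X := by
  refine le_antisymm (iSup_le fun I => I.2.1.encard_le_eRk_of_subset I.2.2) ?_
  obtain ⟨I, hI⟩ := M.exists_isBasis' X
  rw [← hI.encard_eq_eRk]
  exact le_iSup (fun J : {J : Set α // M.Indep J ∧ J ⊆ X} => (J : Set α).encard)
    ⟨I, hI.indep, hI.subset⟩

lemma rk_eq_toNat_eRank (M : Matroid α) : rk M = M.eRank.toNat := by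
  rw [rk, r, er_eq_eRk, eRk_ground]

lemma isMinor_iff : IsMinor N M ↔ N ≤m M :=
  ⟨fun ⟨C, D, h⟩ => ⟨C, D, h.symm⟩, fun ⟨C, D, h⟩ => ⟨C, D, h.symm⟩⟩

lemma point_iff : Point M P ↔ ∃ e, M.IsNonloop e ∧ P = M.closure {e} := by
  refine ⟨fun ⟨hP, hP1⟩ => ?_, ?_⟩
  · rw [er_eq_eRk, eRk_eq_one_iff hP.subset_ground] at hP1
    obtain ⟨e, heP, he, hPe⟩ := hP1
    refine ⟨e, he, hPe.antisymm ?_⟩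
    simpa [hP.closure] using M.closure_subset_closure (singleton_subset_iff.2 heP)
  · rintro ⟨e, he, rfl⟩
    exact ⟨M.isFlat_closure {e}, by rw [er_eq_eRk, eRk_closure_eq, he.eRk_eq]⟩

lemma finite_setOf_point (M : Matroid α) [M.Finite] : {P | Point M P}.Finite :=
  M.ground_finite.finite_subsets.subset fun _ hP => hP.1.subset_ground

lemma eps_eq_zero (h : ∀ e, ¬ M.IsNonloop e) : eps M = 0 := by
  have : {P | Point M P} = ∅ := by
    ext P
    simp only [mem_ofPred_eq, mem_empty_iff_false, iff_false, point_iff]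
    exact fun ⟨e, he, _⟩ => h e he
  rw [eps, this, ncard_empty]

lemma eRk_insert_of_point (hP : Point M P) (hb : b ∈ M.E) (hbP : b ∉ P) :
    M.eRk (insert b P) = 2 := by
  obtain ⟨e, he, rfl⟩ := point_iff.1 hP
  rw [eRk_insert_closure_eq, eRk_insert_eq_add_one ⟨hb, hbP⟩, he.eRk_eq, one_add_one_eq_two]

lemma _root_.Matroid.Indep.eRk_contract_add_encard (hI : M.Indep I) (hX : X ⊆ M.E \ I) :
    (M ／ I).eRk X + I.encard = M.eRk (X ∪ I) := by
  obtain ⟨J, hJ⟩ := (M ／ I).exists_isBasis X (by rwa [contract_ground])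
  have hJI : Disjoint J I := disjoint_of_subset_left (hJ.subset.trans hX) disjoint_sdiff_left
  rw [← hJ.encard_eq_eRk, ← (hI.union_isBasis_union_of_contract_isBasis hJ).encard_eq_eRk,
    encard_union_eq hJI]

lemma _root_.Matroid.IsNonloop.eRk_contract_add_one (hb : M.IsNonloop b) (hX : X ⊆ M.E \ {b}) :
    (M ／ {b}).eRk X + 1 = M.eRk (insert b X) := by
  rw [← encard_singleton b, hb.indep.eRk_contract_add_encard hX, union_singleton]

lemma point_contract_closure (hb : M.IsNonloop b) (hP : Point M P) (hbP : b ∉ P) :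
    Point (M ／ {b}) ((M ／ {b}).closure P) := by
  refine ⟨isFlat_closure _, ?_⟩
  have h := hb.eRk_contract_add_one (subset_sdiff_singleton hP.1.subset_ground hbP)
  rw [eRk_insert_of_point hP hb.mem_ground hbP, ← one_add_one_eq_two] at h
  rw [er_eq_eRk, eRk_closure_eq, WithTop.add_right_cancel ENat.one_ne_top h]

lemma _root_.Matroid.IsNonloop.eRank_contract_add_one (hb : M.IsNonloop b) :
    (M ／ {b}).eRank + 1 = M.eRank := by
  rw [← eRk_ground, contract_ground, hb.eRk_contract_add_one subset_rfl,
    insert_sdiff_singleton, insert_eq_of_mem hb.mem_ground, eRk_ground]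

lemma indep_of_encard_le_two (hT : ∀ e ∈ T, ∀ f ∈ T, M.Indep {e, f}) (hT2 : T.encard ≤ 2) :
    M.Indep T := by
  obtain rfl | ⟨e, he⟩ := T.eq_empty_or_nonempty
  · exact M.empty_indep
  have h1 : (T \ {e}).encard ≤ 1 := by
    rw [← encard_sdiff_singleton_add_one he] at hT2
    exact (ENat.add_le_add_iff_right ENat.one_ne_top).1 (by simpa [one_add_one_eq_two] using hT2)
  obtain h | ⟨f, hf⟩ := encard_le_one_iff_eq.1 h1
  · refine (hT e he e he).subset fun x hx => ?_
    by_contra hxe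
    have hx' : x ∈ T \ {e} := ⟨hx, by simpa using hxe⟩
    simp [h] at hx'
  · have hfT : f ∈ T := (hf.symm.subset (mem_singleton f)).1
    refine (hT e he f hfT).subset fun x hx => ?_
    by_cases hxe : x = e
    · exact Or.inl hxe
    · have hx' : x ∈ T \ {e} := ⟨hx, hxe⟩
      rw [hf] at hx'
      exact Or.inr hx'

lemma hasU2Minor_of_forall_indep_pair (hT : ∀ e ∈ T, ∀ f ∈ T, M.Indep {e, f})
    (hT2 : M.eRk T ≤ 2) (hn : 2 ≤ n) (hnT : n ≤ T.encard) : HasU2Minor M n := by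
  obtain ⟨S, hST, hS⟩ := exists_subset_encard_eq hnT
  have hSE : S ⊆ M.E := fun e he => (hT e (hST he) e (hST he)).subset_ground (by simp)
  have hSpair : ∀ e ∈ S, ∀ f ∈ S, M.Indep {e, f} := fun e he f hf => hT e (hST he) f (hST hf)
  refine ⟨M ↾ S, isMinor_iff.2 ⟨∅, M.E \ S, ?_⟩, fun I hIS hI2 => ?_, ?_, by simpa⟩
  · rw [contract_empty, delete_eq_restrict, sdiff_sdiff_cancel_left hSE]
  · exact (restrict_indep_iff).2
      ⟨indep_of_encard_le_two (fun e he f hf => hSpair e (hIS he) f (hIS hf)) hI2, hIS⟩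
  · have h1S : 1 < S.encard := hS ▸ (by exact_mod_cast hn)
    obtain ⟨e, f, he, hf, hef⟩ := one_lt_encard_iff.1 h1S
    rw [er_eq_eRk, restrict_ground_eq, restrict_eRk_eq _ subset_rfl]
    refine ((M.eRk_mono hST).trans hT2).antisymm ?_
    rw [← encard_pair hef]
    exact (hSpair e he f hf).encard_le_eRk_of_subset (pair_subset he hf)

lemma HasU2Minor.of_isMinor (h : HasU2Minor N n) (hNM : N ≤m M) : HasU2Minor M n := by
  obtain ⟨N', hN', hN'_simple, hN'_rk, hN'_card⟩ := h
  exact ⟨N', isMinor_iff.2 ((isMinor_iff.1 hN').trans hNM), hN'_simple, hN'_rk, hN'_card⟩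

lemma encard_le_of_forall_point_subset (hU : ¬ HasU2Minor M (ℓ + 2)) {S : Set (Set α)}
    (hS : ∀ P ∈ S, Point M P ∧ P ⊆ X) (hX : M.eRk X ≤ 2) : S.encard ≤ ℓ + 1 := by
  obtain rfl | ⟨P₀, hP₀⟩ := S.eq_empty_or_nonempty
  · simp
  have : Nonempty α := ⟨(point_iff.1 (hS P₀ hP₀).1).choose⟩
  choose! rep hrep using fun P (hP : P ∈ S) => point_iff.1 (hS P hP).1
  have hinj : InjOn rep S := fun P hP P' hP' h => by rw [(hrep P hP).2, (hrep P' hP').2, h]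
  have hpair : ∀ e ∈ rep '' S, ∀ f ∈ rep '' S, M.Indep {e, f} := by
    rintro _ ⟨P, hP, rfl⟩ _ ⟨P', hP', rfl⟩
    by_contra hdep
    have hPP' : P = P' := by
      rw [(hrep P hP).2, (hrep P' hP').2,
        (hrep P hP).1.closure_eq_closure_iff_eq_or_dep (hrep P' hP').1]
      exact Or.inr hdep
    subst hPP'
    exact hdep (by simpa using (hrep P hP).1.indep)
  have hsub : rep '' S ⊆ X := by
    rintro _ ⟨P, hP, rfl⟩
    have hmem := M.mem_closure_self _ (hrep P hP).1.mem_ground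
    exact (hS P hP).2 ((hrep P hP).2.symm.subset hmem)
  by_contra! hlt
  refine hU (hasU2Minor_of_forall_indep_pair hpair ((M.eRk_mono hsub).trans hX) (by omega) ?_)
  rw [hinj.encard_image]
  exact_mod_cast Order.add_one_le_of_lt hlt

lemma _root_.Set.ncard_le_mul_ncard_of_mapsTo {s : Set α} {t : Set β} {g : α → β}
    (hs : s.Finite) (ht : t.Finite) (hg : MapsTo g s t)
    (hn : ∀ y ∈ t, {x ∈ s | g x = y}.ncard ≤ n) : s.ncard ≤ n * t.ncard := by
  classical
  rw [ncard_eq_toFinset_card s hs, ncard_eq_toFinset_card t ht]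
  refine Finset.card_le_mul_card_image_of_maps_to
    (fun x hx => by simpa using hg (by simpa using hx)) n fun y hy => ?_
  rw [← ncard_coe_finset]
  convert hn y (by simpa using hy) using 2
  ext x
  simp

lemma eps_le_mul_eps_contract_add_one [M.Finite] (hU : ¬ HasU2Minor M (ℓ + 2))
    (hb : M.IsNonloop b) : eps M ≤ ℓ * eps (M ／ {b}) + 1 := by
  set N := M ／ {b}
  set A := {P | Point M P ∧ b ∉ P}
  have hsplit : {P | Point M P} ⊆ insert (M.closure {b}) A := by
    intro P hP
    by_cases hbP : b ∈ P
    · obtain ⟨e, -, rfl⟩ := point_iff.1 hP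
      exact Or.inl (hb.closure_eq_of_mem_closure hbP).symm
    · exact Or.inr ⟨hP, hbP⟩
  have hmaps : MapsTo N.closure A {Q | Point N Q} := fun P hP =>
    point_contract_closure hb hP.1 hP.2
  have hfibre : ∀ Q ∈ {Q | Point N Q}, {P ∈ A | N.closure P = Q}.ncard ≤ ℓ := by
    intro Q hQ
    have hQE : Q ⊆ M.E \ {b} := hQ.1.subset_ground
    have hline : M.eRk (M.closure (insert b Q)) ≤ 2 := by
      rw [eRk_closure_eq, ← hb.eRk_contract_add_one hQE, ← er_eq_eRk, hQ.2, one_add_one_eq_two]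
    have hcard := encard_le_of_forall_point_subset hU
      (S := insert (M.closure {b}) {P ∈ A | N.closure P = Q}) ?_ hline
    · rw [encard_insert_of_notMem fun h => h.1.2 (M.mem_closure_self b),
        ENat.add_le_add_iff_right ENat.one_ne_top] at hcard
      exact ENat.toNat_le_of_le_natCast hcard
    rintro P (rfl | ⟨hPA, rfl⟩)
    · exact ⟨point_iff.2 ⟨b, hb, rfl⟩, M.closure_subset_closure (by simp)⟩
    · have hPE : P ⊆ N.E := subset_sdiff_singleton hPA.1.1.subset_ground hPA.2
      refine ⟨hPA.1, (N.subset_closure P hPE).trans ((subset_insert b _).trans ?_)⟩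
      exact M.subset_closure _ (insert_subset hb.mem_ground (hQE.trans sdiff_subset))
  have hAfin : A.Finite := (finite_setOf_point M).subset fun _ hP => hP.1
  calc eps M ≤ (insert (M.closure {b}) A).ncard := ncard_le_ncard hsplit (hAfin.insert _)
    _ ≤ A.ncard + 1 := ncard_insert_le _ _
    _ ≤ ℓ * eps N + 1 := by
      gcongr
      exact ncard_le_mul_ncard_of_mapsTo hAfin (finite_setOf_point N) hmaps hfibre

lemma sub_one_mul_le_pow_succ_sub_one {x y : ℕ} (hx : (ℓ - 1) * x ≤ ℓ ^ n - 1)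
    (hy : y ≤ ℓ * x + 1) : (ℓ - 1) * y ≤ ℓ ^ (n + 1) - 1 := by
  obtain _ | k := ℓ
  · simp
  obtain ⟨p, hp⟩ : ∃ p, (k + 1) ^ n = p + 1 := Nat.exists_eq_add_one.2 (by positivity)
  simp only [Nat.add_sub_cancel, hp, pow_succ] at hx ⊢
  calc k * y ≤ k * ((k + 1) * x + 1) := Nat.mul_le_mul_left k hy
    _ = (k + 1) * (k * x) + k := by ring
    _ ≤ (k + 1) * p + k := by gcongr
    _ = (p + 1) * (k + 1) - 1 := Nat.eq_sub_of_add_eq (by ring)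

theorem sub_one_mul_eps_le [M.Finite] (hU : ¬ HasU2Minor M (ℓ + 2)) :
    (ℓ - 1) * eps M ≤ ℓ ^ M.eRank.toNat - 1 := by
  induction hn : M.eRank.toNat using Nat.strong_induction_on generalizing M with
  | _ n ih =>
    by_cases h : ∃ b, M.IsNonloop b
    · obtain ⟨b, hb⟩ := h
      have hrk : (M ／ {b}).eRank.toNat + 1 = n := by
        have hfin : (M ／ {b}).eRank ≠ ⊤ := (M ／ {b}).eRank_ne_top_iff.2 inferInstance
        rw [← hn, ← hb.eRank_contract_add_one, ENat.toNat_add hfin ENat.one_ne_top, ENat.toNat_one]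
      rw [← hrk]
      have hU' : ¬ HasU2Minor (M ／ {b}) (ℓ + 2) := fun h =>
        hU (h.of_isMinor (by simpa using contract_delete_isMinor M {b} ∅))
      exact sub_one_mul_le_pow_succ_sub_one (ih _ (by omega) hU' rfl)
        (eps_le_mul_eps_contract_add_one hU hb)
    · rw [not_exists] at h
      simp [eps_eq_zero h]

lemma Simple.indep_pair (hs : Simple M) (he : e ∈ M.E) (hf : f ∈ M.E) : M.Indep {e, f} :=
  hs _ (pair_subset he hf) ((encard_insert_le _ _).trans (by simp [one_add_one_eq_two]))

lemma Simple.isNonloop (hs : Simple M) (he : e ∈ M.E) : M.IsNonloop e := by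
  simpa using hs.indep_pair he he

lemma Simple.ncard_ground_le_eps [M.Finite] (hs : Simple M) : M.E.ncard ≤ eps M := by
  refine ncard_le_ncard_of_injOn (fun e => M.closure {e})
    (fun e he => point_iff.2 ⟨e, hs.isNonloop he, rfl⟩) (fun e he f hf hef => ?_)
    (finite_setOf_point M)
  by_contra hne
  exact ((hs.isNonloop he).closure_eq_closure_iff_eq_or_dep (hs.isNonloop hf)).1 hef
    |>.resolve_left hne (hs.indep_pair he hf)

end MatroidDHJ

theorem kung_bound_general {α : Type*} (ℓ : ℕ) (M : Matroid α)
    (hfin : M.E.Finite) (hs : Simple M) (hU : ¬ HasU2Minor M (ℓ + 2)) :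
    (ℓ - 1) * M.E.ncard ≤ ℓ ^ rk M - 1 := by
  have : M.Finite := ⟨hfin⟩
  rw [rk_eq_toNat_eRank]
  exact (Nat.mul_le_mul_left _ hs.ncard_ground_le_eps).trans (sub_one_mul_eps_le hU)

theorem kung_bound {α : Type*} (ℓ : ℕ) (hℓ : 2 ≤ ℓ) (M : Matroid α)
    (hfin : M.E.Finite) (hs : Simple M) (hU : ¬ HasU2Minor M (ℓ + 2)) :
    (ℓ - 1) * M.E.ncard ≤ ℓ ^ rk M - 1 :=
  kung_bound_general ℓ M hfin hs hU
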